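/- arXiv:1802.06361 — 2 statements merged into one kernel-verified Lean document; each statement's English description precedes it below -/
import Mathlib

section
/- In the DCS-MA instance constructed from a MinRep instance, a set S ⊆ V' satisfies score(S) > 0 if and only if both u ∈ S and v ∈ S, and for every superedge (A_i, B_j) there exist a ∈ S ∩ A_i and b ∈ S ∩ B_j with {a, b} ∈ E. Moreover, whenever score(S) > 0, we have score(S) = 1/|S| exactly. -/
open scoped Classical

noncomputable section

/-- The set of edges of `G` with both endpoints in `S`. -/
def edgesIn {V : Type*} [Fintype V] (G : SimpleGraph V) (S : Finset V) : Finset (Sym2 V) :=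
  Finset.univ.filter (fun e => e ∈ G.edgeSet ∧ ∀ v ∈ e, v ∈ S)

/-- The DCS-MA objective over an arbitrary (finite, nonempty) index set of frames:
`min_i |E_i[S]| / |S|`, as a rational number. -/
def score {V ι : Type*} [Fintype V] [Fintype ι] [Nonempty ι]
    (G : ι → SimpleGraph V) (S : Finset V) : ℚ :=
  Finset.univ.inf' Finset.univ_nonempty (fun i => ((edgesIn (G i) S).card : ℚ) / S.card)

/-- The common vertex set `V' = A ∪ B ∪ {u, v}` of the DCS-MA instance built from a MinRep
instance with `A`-side vertex type `α` and `B`-side vertex type `β`. -/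
abbrev MRVert (α β : Type*) := (α ⊕ β) ⊕ Bool

def uVert {α β : Type*} : MRVert α β := Sum.inr true
def vVert {α β : Type*} : MRVert α β := Sum.inr false
def aVert {α β : Type*} (a : α) : MRVert α β := Sum.inl (Sum.inl a)
def bVert {α β : Type*} (b : β) : MRVert α β := Sum.inl (Sum.inr b)

/-- `(A_{p.1}, B_{p.2})` is a superedge: some edge of `E` joins part `p.1` of `A` to part
`p.2` of `B`.  Here `ia`/`ib` assign to each vertex its part, and `E` is the edge relation. -/
def Superedge {α β : Type*} {k : ℕ} (ia : α → Fin k) (ib : β → Fin k)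
    (E : α → β → Prop) (p : Fin k × Fin k) : Prop :=
  ∃ a b, ia a = p.1 ∧ ib b = p.2 ∧ E a b

/-- Frame indices: the special frame (whose only edge is `{u,v}`), plus one frame for each
superedge. -/
def FrameIdx {α β : Type*} (k : ℕ) (ia : α → Fin k) (ib : β → Fin k)
    (E : α → β → Prop) : Type _ :=
  Option {p : Fin k × Fin k // Superedge ia ib E p}

instance {α β : Type*} [Fintype α] [Fintype β] {k : ℕ} (ia : α → Fin k) (ib : β → Fin k)
    (E : α → β → Prop) : Fintype (FrameIdx k ia ib E) := by
  unfold FrameIdx; infer_instance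

instance {α β : Type*} {k : ℕ} (ia : α → Fin k) (ib : β → Fin k)
    (E : α → β → Prop) : Nonempty (FrameIdx k ia ib E) := ⟨none⟩

/-- The frames of the constructed DCS-MA instance: frame `none` has exactly the one edge
`{u, v}`; the frame of superedge `(A_i, B_j)` has exactly the edges of `E` between `A_i`
and `B_j`. -/
def frame {α β : Type*} {k : ℕ} (ia : α → Fin k) (ib : β → Fin k) (E : α → β → Prop) :
    FrameIdx k ia ib E → SimpleGraph (MRVert α β)
  | none => SimpleGraph.fromRel (fun x y => x = uVert ∧ y = vVert)
  | some p => SimpleGraph.fromRel (fun x y =>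
      ∃ a b, x = aVert a ∧ y = bVert b ∧ ia a = p.1.1 ∧ ib b = p.1.2 ∧ E a b)

lemma none_char {α β : Type*} [Fintype α] [Fintype β]
    (S : Finset (MRVert α β)) (e : Sym2 (MRVert α β)) :
    e ∈ edgesIn (SimpleGraph.fromRel (fun x y => x = (uVert : MRVert α β) ∧ y = vVert)) S ↔
      e = s(uVert, vVert) ∧ uVert ∈ S ∧ vVert ∈ S := by
  simp only [edgesIn, Finset.mem_filter, Finset.mem_univ, true_and]
  constructor
  · rintro ⟨he, hv⟩
    induction e using Sym2.inductionOn with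
    | hf x y =>
      rw [SimpleGraph.mem_edgeSet, SimpleGraph.fromRel_adj] at he
      obtain ⟨hne, h | h⟩ := he
      · obtain ⟨hx, hy⟩ := h
        subst hx; subst hy
        exact ⟨rfl, hv _ (by simp), hv _ (by simp)⟩
      · obtain ⟨hy, hx⟩ := h
        subst hx; subst hy
        exact ⟨Sym2.eq_swap, hv _ (by simp), hv _ (by simp)⟩
  · rintro ⟨rfl, hu, hv⟩
    refine ⟨?_, ?_⟩
    · rw [SimpleGraph.mem_edgeSet, SimpleGraph.fromRel_adj]
      exact ⟨by simp [uVert, vVert], Or.inl ⟨rfl, rfl⟩⟩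
    · intro w hw
      rcases Sym2.mem_iff.mp hw with rfl | rfl <;> assumption

lemma some_char {α β : Type*} [Fintype α] [Fintype β] {k : ℕ}
    (ia : α → Fin k) (ib : β → Fin k) (E : α → β → Prop) (p : Fin k × Fin k)
    (S : Finset (MRVert α β)) :
    (edgesIn (SimpleGraph.fromRel (fun x y =>
        ∃ a b, x = aVert a ∧ y = bVert b ∧ ia a = p.1 ∧ ib b = p.2 ∧ E a b)) S).Nonempty ↔
      ∃ a b, aVert a ∈ S ∧ bVert b ∈ S ∧ ia a = p.1 ∧ ib b = p.2 ∧ E a b := by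
  constructor
  · rintro ⟨e, he⟩
    simp only [edgesIn, Finset.mem_filter, Finset.mem_univ, true_and] at he
    obtain ⟨he, hv⟩ := he
    induction e using Sym2.inductionOn with
    | hf x y =>
      rw [SimpleGraph.mem_edgeSet, SimpleGraph.fromRel_adj] at he
      obtain ⟨hne, h | h⟩ := he
      · obtain ⟨a, b, hx, hy, h1, h2, h3⟩ := h
        subst hx; subst hy
        exact ⟨a, b, hv _ (by simp), hv _ (by simp), h1, h2, h3⟩
      · obtain ⟨a, b, hy, hx, h1, h2, h3⟩ := h
        subst hx; subst hy
        exact ⟨a, b, hv _ (by simp), hv _ (by simp), h1, h2, h3⟩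
  · rintro ⟨a, b, ha, hb, h1, h2, h3⟩
    refine ⟨s(aVert a, bVert b), ?_⟩
    simp only [edgesIn, Finset.mem_filter, Finset.mem_univ, true_and]
    refine ⟨?_, ?_⟩
    · rw [SimpleGraph.mem_edgeSet, SimpleGraph.fromRel_adj]
      exact ⟨by simp [aVert, bVert], Or.inl ⟨a, b, rfl, rfl, h1, h2, h3⟩⟩
    · intro w hw
      rcases Sym2.mem_iff.mp hw with rfl | rfl <;> assumption

/-- in the DCS-MA instance constructed from a MinRep instance, a set `S ⊆ V'`
has `score(S) > 0` iff `u ∈ S`, `v ∈ S`, and every superedge `(A_i, B_j)` is covered by some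
`a ∈ S ∩ A_i`, `b ∈ S ∩ B_j` with `{a,b} ∈ E`; moreover whenever `score(S) > 0` we have
`score(S) = 1/|S|` exactly. -/
theorem stmt6 {α β : Type*} [Fintype α] [Fintype β] {k : ℕ}
    (ia : α → Fin k) (ib : β → Fin k) (E : α → β → Prop)
    (S : Finset (MRVert α β)) (hS : S.Nonempty) :
    (0 < score (frame ia ib E) S ↔
      uVert ∈ S ∧ vVert ∈ S ∧
        ∀ p : Fin k × Fin k, Superedge ia ib E p →
          ∃ a b, aVert a ∈ S ∧ bVert b ∈ S ∧ ia a = p.1 ∧ ib b = p.2 ∧ E a b) ∧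
    (0 < score (frame ia ib E) S → score (frame ia ib E) S = 1 / (S.card : ℚ)) := by
  classical
  set G := frame ia ib E with hG
  have hScard : (0:ℚ) < S.card := by exact_mod_cast Finset.card_pos.mpr hS
  -- characterize positivity of score
  have key : 0 < score G S ↔ ∀ i, (edgesIn (G i) S).Nonempty := by
    unfold score
    rw [Finset.lt_inf'_iff]
    constructor
    · intro h i
      have := h i (Finset.mem_univ i)
      rw [Finset.nonempty_iff_ne_empty]
      intro hemp
      rw [hemp] at this
      simp at this
    · intro h i _
      have hc : 0 < (edgesIn (G i) S).card := Finset.card_pos.mpr (h i)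
      positivity
  have hnone : ∀ e, e ∈ edgesIn (G none) S ↔
      e = s(uVert, vVert) ∧ uVert ∈ S ∧ vVert ∈ S := by
    intro e
    have : G none = SimpleGraph.fromRel
        (fun x y => x = (uVert : MRVert α β) ∧ y = vVert) := rfl
    rw [this]
    exact none_char S e
  have hsome : ∀ (p : {p : Fin k × Fin k // Superedge ia ib E p}),
      (edgesIn (G (some p)) S).Nonempty ↔
        ∃ a b, aVert a ∈ S ∧ bVert b ∈ S ∧ ia a = p.1.1 ∧ ib b = p.1.2 ∧ E a b := by
    intro p
    have : G (some p) = SimpleGraph.fromRel (fun x y =>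
        ∃ a b, x = aVert a ∧ y = bVert b ∧ ia a = p.1.1 ∧ ib b = p.1.2 ∧ E a b) := rfl
    rw [this]
    exact some_char ia ib E p.1 S
  have main : 0 < score G S ↔
      uVert ∈ S ∧ vVert ∈ S ∧
        ∀ p : Fin k × Fin k, Superedge ia ib E p →
          ∃ a b, aVert a ∈ S ∧ bVert b ∈ S ∧ ia a = p.1 ∧ ib b = p.2 ∧ E a b := by
    rw [key]
    constructor
    · intro h
      obtain ⟨e, he⟩ := h none
      obtain ⟨_, hu, hv⟩ := (hnone e).mp he
      refine ⟨hu, hv, fun p hp => ?_⟩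
      exact (hsome ⟨p, hp⟩).mp (h (some ⟨p, hp⟩))
    · rintro ⟨hu, hv, hcov⟩ i
      match i with
      | none => exact ⟨s(uVert, vVert), (hnone _).mpr ⟨rfl, hu, hv⟩⟩
      | some p => exact (hsome p).mpr (hcov p.1 p.2)
  refine ⟨main, fun hpos => ?_⟩
  have hne : ∀ i, (edgesIn (G i) S).Nonempty := key.mp hpos
  -- card of the none frame is exactly 1
  have hcard1 : (edgesIn (G none) S).card = 1 := by
    obtain ⟨e, he⟩ := hne none
    obtain ⟨rfl, hu, hv⟩ := (hnone e).mp he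
    rw [Finset.card_eq_one]
    refine ⟨s(uVert, vVert), Finset.eq_singleton_iff_unique_mem.mpr ⟨he, fun x hx => ?_⟩⟩
    exact ((hnone x).mp hx).1
  apply le_antisymm
  · have := Finset.inf'_le (b := (none : FrameIdx k ia ib E))
      (fun i => ((edgesIn (G i) S).card : ℚ) / S.card) (Finset.mem_univ _)
    calc score G S ≤ ((edgesIn (G none) S).card : ℚ) / S.card := this
      _ = 1 / S.card := by rw [hcard1]; norm_num
  · apply Finset.le_inf'
    intro i _
    have hc : 1 ≤ (edgesIn (G i) S).card := Finset.card_pos.mpr (hne i)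
    have : (1:ℚ) ≤ ((edgesIn (G i) S).card : ℚ) := by exact_mod_cast hc
    gcongr


end
end

section
/- In the DCS-MA instance constructed from a MinRep instance, the maximum of score(S) over all nonempty S ⊆ V' equals 1 / (c* + 2), where c* is the minimum total size |A'| + |B'| over labelings A' ⊆ A, B' ⊆ B such that for every superedge (A_i, B_j) there exist a ∈ A' ∩ A_i and b ∈ B' ∩ B_j with {a, b} ∈ E. (Hence the reduction from MinRep to DCS-MA is approximation-preserving up to constant factors.) -/
open scoped Classical

noncomputable section

/-- A labeling `(A', B')` is feasible for the MinRep instance if it covers every superedge. -/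
def FeasibleLabeling {α β : Type*} {k : ℕ} (ia : α → Fin k) (ib : β → Fin k)
    (E : α → β → Prop) (A' : Finset α) (B' : Finset β) : Prop :=
  ∀ p : Fin k × Fin k, Superedge ia ib E p →
    ∃ a ∈ A', ∃ b ∈ B', ia a = p.1 ∧ ib b = p.2 ∧ E a b


section Helpers

variable {α β : Type*} [Fintype α] [Fintype β] {k : ℕ}
  {ia : α → Fin k} {ib : β → Fin k} {E : α → β → Prop}

lemma mem_edgesIn {V : Type*} [Fintype V] {G : SimpleGraph V} {S : Finset V} {e : Sym2 V} :
    e ∈ edgesIn G S ↔ e ∈ G.edgeSet ∧ ∀ v ∈ e, v ∈ S := by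
  simp [edgesIn]

lemma uv_ne : (uVert : MRVert α β) ≠ vVert := by simp [uVert, vVert]

lemma frame_none_edge {e : Sym2 (MRVert α β)} :
    e ∈ (frame ia ib E none).edgeSet ↔ e = s(uVert, vVert) := by
  induction e using Sym2.ind with
  | _ x y =>
    rw [SimpleGraph.mem_edgeSet]
    simp only [frame, SimpleGraph.fromRel_adj, Sym2.eq_iff]
    constructor
    · rintro ⟨hne, (⟨rfl, rfl⟩ | ⟨rfl, rfl⟩)⟩
      · exact Or.inl ⟨rfl, rfl⟩
      · exact Or.inr ⟨rfl, rfl⟩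
    · rintro (⟨rfl, rfl⟩ | ⟨rfl, rfl⟩)
      · exact ⟨uv_ne, Or.inl ⟨rfl, rfl⟩⟩
      · exact ⟨uv_ne.symm, Or.inr ⟨rfl, rfl⟩⟩

lemma edgesIn_none_subset (S : Finset (MRVert α β)) :
    edgesIn (frame ia ib E none) S ⊆ {s(uVert, vVert)} := by
  intro e he
  rw [mem_edgesIn] at he
  simp [frame_none_edge.mp he.1]

lemma edgesIn_none_card {S : Finset (MRVert α β)} (hu : uVert ∈ S) (hv : vVert ∈ S) :
    (edgesIn (frame ia ib E none) S).card = 1 := by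
  have h : edgesIn (frame ia ib E none) S = {s(uVert, vVert)} := by
    apply Finset.Subset.antisymm (edgesIn_none_subset S)
    intro e he
    rw [Finset.mem_singleton] at he; subst he
    rw [mem_edgesIn]
    refine ⟨frame_none_edge.mpr rfl, ?_⟩
    intro w hw
    rw [Sym2.mem_iff] at hw
    rcases hw with rfl | rfl <;> assumption
  rw [h, Finset.card_singleton]

lemma frame_some_edge {p : {p : Fin k × Fin k // Superedge ia ib E p}}
    {e : Sym2 (MRVert α β)} (he : e ∈ (frame ia ib E (some p)).edgeSet) :
    ∃ a b, e = s(aVert a, bVert b) ∧ ia a = p.1.1 ∧ ib b = p.1.2 ∧ E a b := by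
  induction e using Sym2.ind with
  | _ x y =>
    rw [SimpleGraph.mem_edgeSet] at he
    simp only [frame, SimpleGraph.fromRel_adj] at he
    obtain ⟨-, (⟨a, b, rfl, rfl, h1, h2, h3⟩ | ⟨a, b, rfl, rfl, h1, h2, h3⟩)⟩ := he
    · exact ⟨a, b, rfl, h1, h2, h3⟩
    · exact ⟨a, b, Sym2.eq_swap.symm, h1, h2, h3⟩

lemma frame_some_edge' {p : {p : Fin k × Fin k // Superedge ia ib E p}} {a : α} {b : β}
    (h1 : ia a = p.1.1) (h2 : ib b = p.1.2) (h3 : E a b) :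
    s(aVert a, bVert b) ∈ (frame ia ib E (some p)).edgeSet := by
  rw [SimpleGraph.mem_edgeSet]
  simp only [frame, SimpleGraph.fromRel_adj]
  exact ⟨by simp [aVert, bVert], Or.inl ⟨a, b, rfl, rfl, h1, h2, h3⟩⟩

lemma card_labelSet (A' : Finset α) (B' : Finset β) :
    (insert uVert (insert vVert (A'.image aVert ∪ B'.image bVert)) : Finset (MRVert α β)).card
      = A'.card + B'.card + 2 := by
  have hainj : Function.Injective (aVert (α := α) (β := β)) := by
    intro x y h; simpa [aVert] using h
  have hbinj : Function.Injective (bVert (α := α) (β := β)) := by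
    intro x y h; simpa [bVert] using h
  have hdisj : Disjoint (A'.image aVert) (B'.image bVert) := by
    rw [Finset.disjoint_left]
    rintro e he1 he2
    simp only [Finset.mem_image] at he1 he2
    obtain ⟨a, -, rfl⟩ := he1
    obtain ⟨b, -, h⟩ := he2
    simp [aVert, bVert] at h
  have hv : (vVert : MRVert α β) ∉ A'.image aVert ∪ B'.image bVert := by
    simp [Finset.mem_union, Finset.mem_image, vVert, aVert, bVert]
  have hu : (uVert : MRVert α β) ∉ insert vVert (A'.image aVert ∪ B'.image bVert) := by
    simp [Finset.mem_insert, Finset.mem_union, Finset.mem_image, uVert, vVert, aVert, bVert]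
  rw [Finset.card_insert_of_notMem hu, Finset.card_insert_of_notMem hv,
    Finset.card_union_of_disjoint hdisj, Finset.card_image_of_injective _ hainj,
    Finset.card_image_of_injective _ hbinj]

end Helpers

/-- in the DCS-MA instance constructed from a MinRep instance, the maximum of
`score(S)` over nonempty `S ⊆ V'` equals `1/(c* + 2)`, where `c*` is the minimum total size
`|A'| + |B'|` of a labeling covering all superedges.  (Hence the reduction from MinRep to
DCS-MA is approximation-preserving up to constant factors.) -/
theorem stmt7 {α β : Type*} [Fintype α] [Fintype β] {k : ℕ}
    (ia : α → Fin k) (ib : β → Fin k) (E : α → β → Prop) :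
    ∃ cstar : ℕ,
      IsLeast {c : ℕ | ∃ A' B', FeasibleLabeling ia ib E A' B' ∧ A'.card + B'.card = c}
        cstar ∧
      IsGreatest
        {q : ℚ | ∃ S : Finset (MRVert α β), S.Nonempty ∧ score (frame ia ib E) S = q}
        (1 / ((cstar : ℚ) + 2)) := by
  classical
  set C : Set ℕ :=
    {c : ℕ | ∃ A' B', FeasibleLabeling ia ib E A' B' ∧ A'.card + B'.card = c} with hC
  have hCne : C.Nonempty := by
    refine ⟨Finset.univ.card + Finset.univ.card, Finset.univ, Finset.univ, ?_, rfl⟩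
    rintro p ⟨a, b, h1, h2, h3⟩
    exact ⟨a, Finset.mem_univ a, b, Finset.mem_univ b, h1, h2, h3⟩
  refine ⟨sInf C, ⟨Nat.sInf_mem hCne, fun c hc => Nat.sInf_le hc⟩, ?_, ?_⟩
  · -- attainment
    obtain ⟨A', B', hfeas, hcard⟩ := Nat.sInf_mem hCne
    set S : Finset (MRVert α β) :=
      insert uVert (insert vVert (A'.image aVert ∪ B'.image bVert)) with hS
    have hu : uVert ∈ S := Finset.mem_insert_self _ _
    have hv : vVert ∈ S := Finset.mem_insert_of_mem (Finset.mem_insert_self _ _)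
    have hScard : S.card = sInf C + 2 := by rw [hS, card_labelSet, hcard]
    have hScardQ : (S.card : ℚ) = ((sInf C : ℕ) : ℚ) + 2 := by rw [hScard]; push_cast; ring
    have hSpos : (0 : ℚ) < S.card := by
      have : 0 < S.card := Finset.card_pos.mpr ⟨_, hu⟩
      exact_mod_cast this
    refine ⟨S, ⟨_, hu⟩, ?_⟩
    rw [score]
    apply le_antisymm
    · calc Finset.univ.inf' Finset.univ_nonempty
            (fun i => ((edgesIn (frame ia ib E i) S).card : ℚ) / S.card)
          ≤ ((edgesIn (frame ia ib E none) S).card : ℚ) / S.card :=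
            Finset.inf'_le _ (Finset.mem_univ none)
        _ = 1 / (((sInf C : ℕ) : ℚ) + 2) := by rw [edgesIn_none_card hu hv, hScardQ]; norm_num
    · apply Finset.le_inf'
      intro i _
      rw [← hScardQ]
      have hone : 1 ≤ (edgesIn (frame ia ib E i) S).card := by
        cases i with
        | none => rw [edgesIn_none_card hu hv]
        | some p =>
          obtain ⟨a, ha, b, hb, h1, h2, h3⟩ := hfeas p.1 p.2
          refine Finset.card_pos.mpr ⟨s(aVert a, bVert b), ?_⟩
          rw [mem_edgesIn]
          refine ⟨frame_some_edge' h1 h2 h3, ?_⟩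
          intro w hw
          rw [Sym2.mem_iff] at hw
          rcases hw with rfl | rfl
          · exact Finset.mem_insert_of_mem (Finset.mem_insert_of_mem
              (Finset.mem_union_left _ (Finset.mem_image_of_mem _ ha)))
          · exact Finset.mem_insert_of_mem (Finset.mem_insert_of_mem
              (Finset.mem_union_right _ (Finset.mem_image_of_mem _ hb)))
      have : (1 : ℚ) ≤ (edgesIn (frame ia ib E i) S).card := by exact_mod_cast hone
      gcongr
  · -- upper bound
    rintro q ⟨S, hSne, rfl⟩
    have hpos : (0 : ℚ) < 1 / (((sInf C : ℕ) : ℚ) + 2) := by positivity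
    by_cases hq : score (frame ia ib E) S ≤ 0
    · linarith
    push_neg at hq
    rw [score] at hq ⊢
    have hSpos : (0 : ℚ) < S.card := by
      have : 0 < S.card := Finset.card_pos.mpr hSne
      exact_mod_cast this
    have hall : ∀ i : FrameIdx k ia ib E, 0 < (edgesIn (frame ia ib E i) S).card := by
      intro i
      have hle := Finset.inf'_le (α := ℚ)
        (fun i => ((edgesIn (frame ia ib E i) S).card : ℚ) / S.card) (Finset.mem_univ i)
      have h2 : (0 : ℚ) < ((edgesIn (frame ia ib E i) S).card : ℚ) / S.card :=
        lt_of_lt_of_le hq (hle.trans_eq rfl)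
      by_contra h
      push_neg at h
      interval_cases h' : (edgesIn (frame ia ib E i) S).card
      · simp [h'] at h2
    obtain ⟨e, he⟩ := Finset.card_pos.mp (hall none)
    rw [mem_edgesIn] at he
    have heq := frame_none_edge.mp he.1
    subst heq
    have hu : uVert ∈ S := he.2 _ (Sym2.mem_mk_left _ _)
    have hv : vVert ∈ S := he.2 _ (Sym2.mem_mk_right _ _)
    set A'' : Finset α := Finset.univ.filter (fun a => aVert a ∈ S) with hA
    set B'' : Finset β := Finset.univ.filter (fun b => bVert b ∈ S) with hB
    have hfeas : FeasibleLabeling ia ib E A'' B'' := by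
      intro p hp
      obtain ⟨e, hef⟩ := Finset.card_pos.mp (hall (some ⟨p, hp⟩))
      rw [mem_edgesIn] at hef
      obtain ⟨a, b, heq, h1, h2, h3⟩ := frame_some_edge hef.1
      subst heq
      refine ⟨a, ?_, b, ?_, h1, h2, h3⟩
      · rw [hA, Finset.mem_filter]
        exact ⟨Finset.mem_univ a, hef.2 _ (Sym2.mem_mk_left _ _)⟩
      · rw [hB, Finset.mem_filter]
        exact ⟨Finset.mem_univ b, hef.2 _ (Sym2.mem_mk_right _ _)⟩
    have hmin : sInf C ≤ A''.card + B''.card := Nat.sInf_le ⟨A'', B'', hfeas, rfl⟩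
    have hsub : insert uVert (insert vVert (A''.image aVert ∪ B''.image bVert)) ⊆ S := by
      intro x hx
      simp only [Finset.mem_insert, Finset.mem_union, Finset.mem_image] at hx
      rcases hx with rfl | rfl | ⟨a, ha, rfl⟩ | ⟨b, hb, rfl⟩
      · exact hu
      · exact hv
      · rw [hA, Finset.mem_filter] at ha; exact ha.2
      · rw [hB, Finset.mem_filter] at hb; exact hb.2
    have hScard : sInf C + 2 ≤ S.card := by
      have h := Finset.card_le_card hsub
      rw [card_labelSet] at h
      omega
    have hScardQ : ((sInf C : ℕ) : ℚ) + 2 ≤ (S.card : ℚ) := by exact_mod_cast hScard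
    calc Finset.univ.inf' Finset.univ_nonempty
          (fun i => ((edgesIn (frame ia ib E i) S).card : ℚ) / S.card)
        ≤ ((edgesIn (frame ia ib E none) S).card : ℚ) / S.card :=
          Finset.inf'_le _ (Finset.mem_univ none)
      _ ≤ 1 / (S.card : ℚ) := by
          have h1 : (edgesIn (frame ia ib E none) S).card ≤ 1 := by
            have := Finset.card_le_card (edgesIn_none_subset (ia := ia) (ib := ib) (E := E) S)
            simpa using this
          have : ((edgesIn (frame ia ib E none) S).card : ℚ) ≤ 1 := by exact_mod_cast h1
          gcongr
      _ ≤ 1 / (((sInf C : ℕ) : ℚ) + 2) := by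
          apply one_div_le_one_div_of_le (by positivity) hScardQ

end
end
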